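/- Let H be a finite simple graph on n vertices with chromatic number χ. Then ρ(H) ≥ (n/2)·(n/χ + 1), i.e., 2·χ·ρ(H) ≥ n·(n + χ). -/

import Mathlib

/-!
Let `G →r H` with `|G| = ρ(H)`, `n = |H|` and `χ = χ(H)`. Peel off disjoint independent sets
`I₀, I₁, …` of `G` greedily: colour `I_j` with colour `j` for `j < i` and every other vertex of `G`
with its own fresh colour. A rainbow induced copy of `H` then has at most `i` vertices in
`I₀ ∪ … ∪ I_{i-1}`, hence at least `n - i` outside, and a colour class of a `χ`-colouring of `H`
among them is an independent set `I_i` of `G` of size `⌈(n - i)/χ⌉`, because the copy is induced.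
So `ρ(H) ≥ ∑_{k=1}^{n} ⌈k/χ⌉ ≥ n(n + χ)/(2χ)`. The minimum is attained since replacing every vertex
of `H` by an `n`-clique gives a graph `G` with `G →r H`, by Hall's theorem.
-/

/-- `ArrowsR G H` (written `G →r H`) means: every proper vertex coloring of `G`
contains a rainbow induced subgraph isomorphic to `H`, i.e. an induced copy of `H`
(a graph embedding) whose vertices receive pairwise distinct colors. -/
def ArrowsR {α β : Type} (G : SimpleGraph α) (H : SimpleGraph β) : Prop :=
  ∀ c : α → ℕ, (∀ u v : α, G.Adj u v → c u ≠ c v) →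
    ∃ f : H ↪g G, Function.Injective fun h => c (f h)

/-- `rho H` is the minimum number of vertices of a graph `G` with `G →r H`. -/
noncomputable def rho {β : Type} (H : SimpleGraph β) : ℕ :=
  sInf {m : ℕ | ∃ G : SimpleGraph (Fin m), ArrowsR G H}

open Finset

lemma two_mul_mul_sum_range_div_add_one {χ : ℕ} (hχ : 0 < χ) (n : ℕ) :
    2 * χ * ∑ j ∈ range n, (j / χ + 1) = n * (n + χ) + n % χ * (χ - n % χ) := by
  induction n with
  | zero => simp
  | succ n ih =>
    rw [sum_range_succ, Nat.mul_add, ih]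
    have hdiv : χ * (n / χ) + n % χ = n := Nat.div_add_mod n χ
    have hlt : n % χ < χ := Nat.mod_lt n hχ
    set q := n / χ
    set r := n % χ
    have hdivℤ : (χ : ℤ) * q + r = n := by exact_mod_cast hdiv
    rcases (show r + 1 ≤ χ from hlt).lt_or_eq with hr | hr
    · have hmod : (n + 1) % χ = r + 1 := by
        rw [← hdiv, add_assoc, Nat.mul_add_mod, Nat.mod_eq_of_lt hr]
      rw [hmod]
      zify [hlt.le, hr.le]
      linear_combination 2 * hdivℤ
    · have hmod : (n + 1) % χ = 0 := by
        rw [← hdiv, add_assoc, Nat.mul_add_mod, hr, Nat.mod_self]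
      rw [hmod]
      zify [hlt.le]
      have hrℤ : (r : ℤ) + 1 = χ := by exact_mod_cast hr
      linear_combination 2 * hdivℤ - (r + 1) * hrℤ

lemma ArrowsR.of_iso {α β γ : Type} {G : SimpleGraph α} {G' : SimpleGraph β}
    {H : SimpleGraph γ} (e : G ≃g G') (h : ArrowsR G H) : ArrowsR G' H := by
  intro c hc
  obtain ⟨f, hf⟩ := h (c ∘ e) fun u v huv => hc _ _ (e.map_adj_iff.mpr huv)
  exact ⟨e.toEmbedding.comp f, hf⟩

namespace SimpleGraph

variable {α V : Type} {G : SimpleGraph α} {H : SimpleGraph V}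

/-- The lexicographic product `H[Kₙ]`. -/
def cliqueBlowup (H : SimpleGraph V) (n : ℕ) : SimpleGraph (V × Fin n) where
  Adj a b := H.Adj a.1 b.1 ∨ (a.1 = b.1 ∧ a.2 ≠ b.2)
  symm.symm _ _ := Or.imp (fun h => h.symm) fun h => ⟨h.1.symm, h.2.symm⟩
  loopless.irrefl _ h := h.elim (H.loopless.irrefl _) fun h => h.2 rfl

lemma arrowsR_cliqueBlowup [Fintype V] (H : SimpleGraph V) :
    ArrowsR (H.cliqueBlowup (Fintype.card V)) H := by
  classical
  intro c hc
  have hclique (v : V) : Function.Injective fun i => c (v, i) := fun i j hij => by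
    by_contra hne
    exact hc (v, i) (v, j) (Or.inr ⟨rfl, hne⟩) hij
  -- each clique offers `card V` distinct colors, so Hall's condition holds trivially
  have hall (s : Finset V) : #s ≤ #(s.biUnion fun v => univ.image fun i => c (v, i)) := by
    obtain rfl | ⟨v, hv⟩ := s.eq_empty_or_nonempty
    · simp
    calc #s ≤ Fintype.card V := card_le_univ s
      _ = #(univ.image fun i => c (v, i)) := by simp [card_image_of_injective _ (hclique v)]
      _ ≤ _ := card_le_card (subset_biUnion_of_mem (fun v => univ.image fun i => c (v, i)) hv)
  obtain ⟨g, hg, hgc⟩ := (all_card_le_biUnion_card_iff_exists_injective _).mp hall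
  choose φ hφ using fun v => mem_image.mp (hgc v)
  refine ⟨⟨⟨fun v => (v, φ v), fun u v h => congrArg Prod.fst h⟩, ?_⟩, ?_⟩
  · intro u v
    show H.Adj u v ∨ (u = v ∧ φ u ≠ φ v) ↔ H.Adj u v
    exact ⟨Or.rec id fun h => absurd (congrArg φ h.1) h.2, Or.inl⟩
  · exact fun u v huv => hg ((hφ u).2.symm.trans (huv.trans (hφ v).2))

lemma exists_arrowsR_fin [Fintype V] (H : SimpleGraph V) :
    ∃ m, ∃ G : SimpleGraph (Fin m), ArrowsR G H :=
  let e := Fintype.equivFin (V × Fin (Fintype.card V))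
  ⟨_, _, (arrowsR_cliqueBlowup H).of_iso (Iso.map e _)⟩

lemma IsIndepSet.image_embedding (f : H ↪g G) {s : Set V} (hs : H.IsIndepSet s) :
    G.IsIndepSet (f '' s) := by
  rintro _ ⟨u, hu, rfl⟩ _ ⟨v, hv, rfl⟩ huv hadj
  exact hs hu hv (fun h => huv (congrArg f h)) (f.map_adj_iff.mp hadj)

lemma Coloring.exists_isIndepSet_lt_card {χ : ℕ} (C : H.Coloring (Fin χ)) {T : Finset V} {k : ℕ}
    (hk : k < #T) : ∃ I ⊆ T, H.IsIndepSet I ∧ k / χ < #I := by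
  classical
  obtain ⟨a, -, ha⟩ := exists_lt_card_fiber_of_mul_lt_card_of_maps_to (s := T) (t := univ)
    (f := C) (n := k / χ) (fun _ _ => mem_univ _) (by simpa using (Nat.mul_div_le k χ).trans_lt hk)
  refine ⟨T.filter (C · = a), filter_subset _ _, ?_, ha⟩
  intro u hu v hv _ hadj
  simp only [coe_filter, Set.mem_ofPred_eq] at hu hv
  exact C.valid hadj (hu.2.trans hv.2.symm)

end SimpleGraph

namespace ArrowsR

open SimpleGraph

variable {α V : Type} [Fintype α] [DecidableEq α] [Fintype V]
  {G : SimpleGraph α} {H : SimpleGraph V}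

lemma exists_embedding_lt_card_filter_notMem (hGH : ArrowsR G H) {S : Finset α} {d : α → ℕ}
    {i k : ℕ} (hd : ∀ u ∈ S, ∀ v ∈ S, G.Adj u v → d u ≠ d v) (hdi : ∀ v ∈ S, d v < i)
    (hik : i + k < Fintype.card V) :
    ∃ f : H ↪g G, k < #{h | f h ∉ S} := by
  obtain ⟨e, he⟩ := Countable.exists_injective_nat α
  -- fresh colors off `S`, so a rainbow copy of `H` meets `S` in at most `i` vertices
  let c (v : α) : ℕ := if v ∈ S then d v else i + e v
  have hc : ∀ u v, G.Adj u v → c u ≠ c v := by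
    intro u v huv
    by_cases hu : u ∈ S <;> by_cases hv : v ∈ S <;> simp only [c, hu, hv, if_true, if_false]
    · exact hd u hu v hv huv
    · have := hdi u hu; omega
    · have := hdi v hv; omega
    · exact fun h => G.ne_of_adj huv (he (by omega))
  obtain ⟨f, hf⟩ := hGH c hc
  have hin : #{h | f h ∈ S} ≤ i := by
    simpa using card_le_card_of_injOn (fun h => c (f h)) (t := range i)
      (fun h hh => by simp_all [c]) hf.injOn
  have := card_filter_add_card_filter_not (s := univ) (p := fun h => f h ∈ S)
  exact ⟨f, by simp only [card_univ] at this; omega⟩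

lemma exists_isIndepSet_disjoint (hGH : ArrowsR G H) {χ : ℕ} (C : H.Coloring (Fin χ))
    {S : Finset α} {d : α → ℕ} {i k : ℕ} (hd : ∀ u ∈ S, ∀ v ∈ S, G.Adj u v → d u ≠ d v)
    (hdi : ∀ v ∈ S, d v < i) (hik : i + k < Fintype.card V) :
    ∃ I : Finset α, G.IsIndepSet I ∧ Disjoint S I ∧ k / χ < #I := by
  obtain ⟨f, hf⟩ := hGH.exists_embedding_lt_card_filter_notMem hd hdi hik
  obtain ⟨I, hIS, hI, hIk⟩ := C.exists_isIndepSet_lt_card hf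
  refine ⟨I.map f.toEmbedding, by simpa using hI.image_embedding f, ?_, by simpa using hIk⟩
  rw [disjoint_right]
  rintro _ hv
  obtain ⟨h, hh, rfl⟩ := mem_map.mp hv
  exact (mem_filter.mp (hIS hh)).2

lemma sum_div_add_one_le_card_compl (hGH : ArrowsR G H) {χ : ℕ} (C : H.Coloring (Fin χ))
    (k : ℕ) {i : ℕ} (hik : i + k = Fintype.card V) {S : Finset α} {d : α → ℕ}
    (hd : ∀ u ∈ S, ∀ v ∈ S, G.Adj u v → d u ≠ d v) (hdi : ∀ v ∈ S, d v < i) :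
    ∑ j ∈ range k, (j / χ + 1) ≤ #Sᶜ := by
  -- `j / χ + 1 = ⌈(j + 1) / χ⌉` is the size guaranteed for the independent set peeled off when
  -- `j + 1` vertices of the copy of `H` must avoid `S`
  induction k generalizing i S d with
  | zero => simp
  | succ k ih =>
    obtain ⟨I, hI, hSI, hIk⟩ := hGH.exists_isIndepSet_disjoint C (k := k) hd hdi (by omega)
    have hS : ∀ v ∈ S ∪ I, v ∉ I → v ∈ S := fun v hv => (mem_union.mp hv).resolve_right
    have hnext := ih (i := i + 1) (S := S ∪ I) (d := fun v => if v ∈ I then i else d v)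
      (by omega) ?_ ?_
    · have hcard := card_union_of_disjoint hSI
      have := card_le_univ (S ∪ I)
      rw [card_compl] at hnext ⊢
      rw [sum_range_succ]
      omega
    · intro u hu v hv huv
      by_cases hu' : u ∈ I <;> by_cases hv' : v ∈ I <;> simp only [hu', hv', if_true, if_false]
      · exact absurd huv (hI hu' hv' (G.ne_of_adj huv))
      · have := hdi v (hS v hv hv'); omega
      · have := hdi u (hS u hu hu'); omega
      · exact hd u (hS u hu hu') v (hS v hv hv') huv
    · intro v hv
      by_cases hv' : v ∈ I <;> simp only [hv', if_true, if_false]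
      · omega
      · have := hdi v (hS v hv hv'); omega

lemma sum_div_add_one_le_card (hGH : ArrowsR G H) {χ : ℕ} (C : H.Coloring (Fin χ)) :
    ∑ j ∈ range (Fintype.card V), (j / χ + 1) ≤ Fintype.card α := by
  simpa using hGH.sum_div_add_one_le_card_compl C _ (zero_add _) (S := ∅) (d := 0)
    (by simp) (by simp)

end ArrowsR

/-- `ρ(H) ≥ (n/2)(n/χ + 1)`, stated as `2·χ·ρ(H) ≥ n·(n + χ)`. -/
theorem stmt2 {V : Type} [Fintype V] (H : SimpleGraph V) (n χ : ℕ)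
    (hn : n = Fintype.card V) (hχ : H.chromaticNumber = χ) :
    n * (n + χ) ≤ 2 * χ * rho H := by
  subst hn
  obtain ⟨C⟩ : H.Colorable χ := SimpleGraph.chromaticNumber_le_iff_colorable.mp hχ.le
  obtain rfl | hχpos := Nat.eq_zero_or_pos χ
  · have : IsEmpty V := SimpleGraph.colorable_zero_iff.mp ⟨C⟩
    simp
  obtain ⟨G, hG⟩ : ∃ G : SimpleGraph (Fin (rho H)), ArrowsR G H :=
    Nat.sInf_mem (SimpleGraph.exists_arrowsR_fin H)
  calc _ ≤ 2 * χ * ∑ j ∈ range (Fintype.card V), (j / χ + 1) := by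
        rw [two_mul_mul_sum_range_div_add_one hχpos]
        exact Nat.le_add_right _ _
    _ ≤ 2 * χ * rho H := by
        simpa using Nat.mul_le_mul_left (2 * χ) (hG.sum_div_add_one_le_card C)
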